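/- arXiv:1508.04232 — 6 statements merged into one kernel-verified Lean document; each statement's English description precedes it below -/
import Mathlib

section
/- Let C ⊆ ℝⁿ be a forward invariant set for the system ẋ = f(x), where f : ℝⁿ → ℝⁿ is C². Suppose there exist T > 0 and ε > 0 such that for every x ∈ C and every unit vector θ (‖θ‖ = 1) with K_j(x,θ) ≥ 0 for all j ∈ {1,…,m}, the following holds for each i: if 0 ≤ K_i(x,θ) ≤ ε, then the total derivative of K_i at (x,θ) applied to the vector (f(x), (Df(x) − ⟨θ, Df(x)θ⟩·I)θ) is ≥ ε/T. Then the system is strictly differentially positive on C: for every solution x(·) of ẋ = f(x) with x(0) ∈ C, every solution δx(·) of the variational equation d/dt δx(t) = Df(x(t)) δx(t) with δx(0) ∈ K(x(0))\{0}, and every t ≥ T, one has K_i(x(t), δx(t)/‖δx(t)‖) ≥ ε for all i, i.e. δx(t) ∈ K_ε(x(t)). -/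
/-!
The normalized variational solution `θ = δx / ‖δx‖` is well defined for all times, since a
solution of a linear equation that vanishes once vanishes identically, and it obeys
`θ' = (Df(x) − ⟨θ, Df(x) θ⟩ I) θ`. Hence `φᵢ(t) = Kᵢ(x(t), θ(t))` has exactly the derivative
bounded in the hypothesis, which is at least `ε / T > 0` while all `φⱼ ≥ 0` and `φᵢ ≤ ε`.
So no `φᵢ` can cross `0` (the cone field is forward invariant) nor fall back below `ε`, and
while `φᵢ < ε` it grows at rate at least `ε / T`, reaching `ε` by time `T`.
-/

open Set Filter Topology
open scoped RealInnerProductSpace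

/-- The cone at `x` determined by the cone-field representation functions `K i`:
`K(x) = {0} ∪ {v ≠ 0 : K_i(x,v) ≥ 0 for all i}`. -/
def coneAt {n m : ℕ} (K : Fin m → EuclideanSpace ℝ (Fin n) → EuclideanSpace ℝ (Fin n) → ℝ)
    (x : EuclideanSpace ℝ (Fin n)) : Set (EuclideanSpace ℝ (Fin n)) :=
  insert 0 {v | v ≠ 0 ∧ ∀ i, 0 ≤ K i x v}

theorem HasDerivAt.eventually_nhdsGT_lt {f : ℝ → ℝ} {f' x : ℝ} (hf : HasDerivAt f f' x)
    (hf' : 0 < f') : ∀ᶠ y in 𝓝[>] x, f x < f y := by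
  filter_upwards [(hasDerivAt_iff_tendsto_slope_left_right.1 hf).2.eventually
    (eventually_gt_nhds hf'), self_mem_nhdsWithin] with y hslope hxy
  exact (slope_pos_iff_of_le (le_of_lt hxy)).1 hslope

theorem nonneg_of_hasDerivAt_pos_of_eq_zero {ι : Type*} [Finite ι] {φ φ' : ι → ℝ → ℝ} {a : ℝ}
    (hφ : ∀ j t, HasDerivAt (φ j) (φ' j t) t) (ha : ∀ j, 0 ≤ φ j a)
    (hbarrier : ∀ t, a ≤ t → (∀ j, 0 ≤ φ j t) → ∀ j, φ j t = 0 → 0 < φ' j t) :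
    ∀ t, a ≤ t → ∀ j, 0 ≤ φ j t := by
  intro t hat
  have hclosed : IsClosed {u | ∀ j, 0 ≤ φ j u} := by
    simp only [ofPred_forall]
    exact isClosed_iInter fun j =>
      isClosed_le continuous_const (continuous_iff_continuousAt.2 fun u => (hφ j u).continuousAt)
  refine (hclosed.inter isClosed_Icc).Icc_subset_of_forall_mem_nhdsWithin ha ?_ ⟨hat, le_rfl⟩
  rintro u ⟨hu, hau, -⟩
  have hright : ∀ j, ∀ᶠ v in 𝓝[>] u, 0 ≤ φ j v := by
    intro j
    rcases (hu j).eq_or_lt with hzero | hpos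
    · filter_upwards [(hφ j u).eventually_nhdsGT_lt (hbarrier u hau hu j hzero.symm)]
        with v hv using hzero ▸ hv.le
    · exact ((hφ j u).continuousAt.eventually (lt_mem_nhds hpos)).filter_mono
        nhdsWithin_le_nhds |>.mono fun _ => le_of_lt
  exact eventually_all.2 hright

theorem le_apply_of_le_mul_of_hasDerivAt_ge {g g' : ℝ → ℝ} {r ε : ℝ} (hr : 0 < r)
    (hg : ∀ t, HasDerivAt g (g' t) t) (h0 : 0 ≤ g 0)
    (hbound : ∀ t, 0 ≤ t → g t ≤ ε → r ≤ g' t) :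
    ∀ t, 0 ≤ t → ε ≤ r * t → ε ≤ g t := by
  intro t ht hεt
  by_contra! hlt
  have hbelow : ∀ u ∈ Icc 0 t, g u ≤ ε := by
    intro u hu
    by_contra! hu'
    have := nonneg_of_hasDerivAt_pos_of_eq_zero (φ := fun _ : Unit => (g · - ε)) (a := u)
      (fun _ v => (hg v).sub_const ε) (fun _ => sub_nonneg.2 hu'.le)
      (fun v huv _ _ hv => hr.trans_le (hbound v (hu.1.trans huv) (sub_eq_zero.1 hv).le))
      t hu.2 ()
    linarith
  have hgrowth := (convex_Icc 0 t).mul_sub_le_image_sub_of_le_deriv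
    (fun u _ => (hg u).continuousAt.continuousWithinAt)
    (fun u _ => (hg u).differentiableAt.differentiableWithinAt)
    (fun u hu => by
      rw [interior_Icc] at hu
      rw [(hg u).deriv]
      exact hbound u hu.1.le (hbelow u (Ioo_subset_Icc_self hu)))
    0 (left_mem_Icc.2 ht) t (right_mem_Icc.2 ht) ht
  linarith

theorem eq_zero_of_hasDerivAt_clm_apply {E : Type*} [NormedAddCommGroup E] [NormedSpace ℝ E]
    {A : ℝ → E →L[ℝ] E} (hA : Continuous A) {v : ℝ → E}
    (hv : ∀ t, HasDerivAt v (A t (v t)) t) {t₀ : ℝ} (h : v t₀ = 0) (t : ℝ) : v t = 0 := by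
  set a := min t₀ t - 1
  set b := max t₀ t + 1
  obtain ⟨M, hM⟩ := (isCompact_Icc (a := a) (b := b)).exists_bound_of_continuousOn hA.continuousOn
  have hlip : ∀ s ∈ Ioo a b, LipschitzOnWith M.toNNReal (A s) univ := fun s hs =>
    ((A s).lipschitz.weaken (by
      rw [← NNReal.coe_le_coe, coe_nnnorm, Real.coe_toNNReal']
      exact (hM s (Ioo_subset_Icc_self hs)).trans (le_max_left _ _))).lipschitzOnWith
  have hmem : ∀ s, min t₀ t ≤ s → s ≤ max t₀ t → s ∈ Ioo a b := fun s h₁ h₂ =>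
    ⟨by linarith, by linarith⟩
  exact ODE_solution_unique_of_mem_Ioo hlip (hmem t₀ (min_le_left _ _) (le_max_left _ _))
    (fun s _ => ⟨hv s, mem_univ _⟩) (g := 0) (fun s _ => ⟨by simp, mem_univ _⟩)
    (by simpa using h) (hmem t (min_le_right _ _) (le_max_right _ _))

theorem HasDerivAt.inv_norm_smul {E : Type*} [NormedAddCommGroup E] [InnerProductSpace ℝ E]
    {v : ℝ → E} {v' : E} {t : ℝ} (hv : HasDerivAt v v' t) (h0 : v t ≠ 0) :
    HasDerivAt (fun s => ‖v s‖⁻¹ • v s)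
      (‖v t‖⁻¹ • v' - ⟪‖v t‖⁻¹ • v t, ‖v t‖⁻¹ • v'⟫ • ‖v t‖⁻¹ • v t) t := by
  have hnorm : ‖v t‖ ≠ 0 := norm_ne_zero_iff.2 h0
  have hn : HasDerivAt (‖v ·‖) (⟪v t, v'⟫ / ‖v t‖) t := by
    have := hv.norm_sq.sqrt (pow_ne_zero 2 hnorm)
    simp only [Real.sqrt_sq (norm_nonneg _)] at this
    convert this using 1
    field_simp
  convert (hn.inv hnorm).smul hv using 1
  · rfl
  rw [inner_smul_left, inner_smul_right, smul_smul, sub_eq_add_neg, ← neg_smul]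
  congr 2
  simp only [conj_trivial]
  field_simp

theorem strict_differential_positivity_geometric_general {n m : ℕ}
    (f : EuclideanSpace ℝ (Fin n) → EuclideanSpace ℝ (Fin n))
    (hf : ContDiff ℝ 2 f)
    (C : Set (EuclideanSpace ℝ (Fin n)))
    (hC : ∀ x : ℝ → EuclideanSpace ℝ (Fin n),
      (∀ t, HasDerivAt x (f (x t)) t) → x 0 ∈ C → ∀ t, 0 ≤ t → x t ∈ C)
    (K : Fin m → EuclideanSpace ℝ (Fin n) → EuclideanSpace ℝ (Fin n) → ℝ)
    (hKsmooth : ∀ i, ∀ x v : EuclideanSpace ℝ (Fin n), v ≠ 0 →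
      DifferentiableAt ℝ
        (fun p : EuclideanSpace ℝ (Fin n) × EuclideanSpace ℝ (Fin n) => K i p.1 p.2) (x, v))
    (hKhom : ∀ i, ∀ x v : EuclideanSpace ℝ (Fin n), v ≠ 0 → ∀ ρ : ℝ, 0 < ρ →
      K i x (ρ • v) = K i x v)
    (T ε : ℝ) (hT : 0 < T) (hε : 0 < ε)
    (hgeom : ∀ x ∈ C, ∀ θ : EuclideanSpace ℝ (Fin n), ‖θ‖ = 1 → (∀ j, 0 ≤ K j x θ) →
      ∀ i, 0 ≤ K i x θ → K i x θ ≤ ε →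
      ε / T ≤ fderiv ℝ
        (fun p : EuclideanSpace ℝ (Fin n) × EuclideanSpace ℝ (Fin n) => K i p.1 p.2)
        (x, θ) (f x, fderiv ℝ f x θ - (inner ℝ θ (fderiv ℝ f x θ) : ℝ) • θ))
    (x : ℝ → EuclideanSpace ℝ (Fin n))
    (hx : ∀ t, HasDerivAt x (f (x t)) t)
    (hx0 : x 0 ∈ C)
    (δx : ℝ → EuclideanSpace ℝ (Fin n))
    (hδx : ∀ t, HasDerivAt δx (fderiv ℝ f (x t) (δx t)) t)
    (hδx0 : δx 0 ∈ coneAt K (x 0) \ {0}) :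
    ∀ t, T ≤ t → ∀ i, ε ≤ K i (x t) (‖δx t‖⁻¹ • δx t) := by
  have hA : Continuous fun t => fderiv ℝ f (x t) :=
    (hf.continuous_fderiv (by norm_num)).comp (continuous_iff_continuousAt.2 fun t =>
      (hx t).continuousAt)
  have hδx_ne : ∀ t, δx t ≠ 0 := fun t h =>
    hδx0.2 (eq_zero_of_hasDerivAt_clm_apply hA hδx h 0)
  set θ := fun t => ‖δx t‖⁻¹ • δx t
  have hθ_unit : ∀ t, ‖θ t‖ = 1 := fun t => norm_smul_inv_norm (𝕜 := ℝ) (hδx_ne t)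
  have hθ_ne : ∀ t, θ t ≠ 0 := fun t => norm_ne_zero_iff.1 (by simp [hθ_unit t])
  have hθ : ∀ t, HasDerivAt θ
      (fderiv ℝ f (x t) (θ t) - ⟪θ t, fderiv ℝ f (x t) (θ t)⟫ • θ t) t := by
    intro t
    simpa only [θ, map_smul] using (hδx t).inv_norm_smul (hδx_ne t)
  set φ : Fin m → ℝ → ℝ := fun j s => K j (x s) (θ s)
  set Φ : Fin m → ℝ → ℝ := fun j s =>
    fderiv ℝ (fun p : EuclideanSpace ℝ (Fin n) × EuclideanSpace ℝ (Fin n) => K j p.1 p.2)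
      (x s, θ s) (f (x s), fderiv ℝ f (x s) (θ s) - ⟪θ s, fderiv ℝ f (x s) (θ s)⟫ • θ s)
  have hφ : ∀ j t, HasDerivAt (φ j) (Φ j t) t := fun j t =>
    (hKsmooth j (x t) (θ t) (hθ_ne t)).hasFDerivAt.comp_hasDerivAt (x := t)
      (f := fun s => (x s, θ s)) ((hx t).prodMk (hθ t))
  have hφ0 : ∀ j, 0 ≤ φ j 0 := by
    intro j
    simp only [φ, θ]
    rw [hKhom j _ _ (hδx_ne 0) _ (inv_pos.2 (norm_pos_iff.2 (hδx_ne 0)))]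
    exact (hδx0.1.resolve_left hδx0.2).2 j
  have hgrowth : ∀ t, 0 ≤ t → (∀ j, 0 ≤ φ j t) → ∀ j, φ j t ≤ ε → ε / T ≤ Φ j t :=
    fun t ht hK j => hgeom _ (hC x hx hx0 t ht) _ (hθ_unit t) hK j (hK j)
  have hcone : ∀ t, 0 ≤ t → ∀ j, 0 ≤ φ j t :=
    nonneg_of_hasDerivAt_pos_of_eq_zero hφ hφ0
      fun t ht hK j hj => (div_pos hε hT).trans_le (hgrowth t ht hK j (hj.trans_le hε.le))
  intro t ht i
  exact le_apply_of_le_mul_of_hasDerivAt_ge (div_pos hε hT) (hφ i) (hφ0 i)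
    (fun s hs => hgrowth s hs (hcone s hs) i) t (hT.le.trans ht)
    (by rw [div_mul_eq_mul_div, le_div_iff₀ hT]; nlinarith)

/-- **Theorem 2 (strict differential positivity from pointwise geometric conditions).**
Suppose there are `T > 0` and `ε > 0` such that for every `x ∈ C` and every unit vector `θ`
in the cone `K(x)`, whenever `0 ≤ K_i(x,θ) ≤ ε` the derivative of `K_i` along the normalized
prolonged vector field `(f(x), (Df(x) − ⟨θ, Df(x)θ⟩ I)θ)` is at least `ε/T`. Then the system
is strictly differentially positive on the forward invariant set `C`: for every solution of
the variational equation starting in `K(x(0)) \ {0}`, the normalized solution lies in the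
`ε`-subcone `K_ε(x(t))` for all `t ≥ T`. -/
theorem strict_differential_positivity_geometric {n m : ℕ}
    (f : EuclideanSpace ℝ (Fin n) → EuclideanSpace ℝ (Fin n))
    (hf : ContDiff ℝ 2 f)
    (C : Set (EuclideanSpace ℝ (Fin n)))
    (hC : ∀ x : ℝ → EuclideanSpace ℝ (Fin n),
      (∀ t, HasDerivAt x (f (x t)) t) → x 0 ∈ C → ∀ t, 0 ≤ t → x t ∈ C)
    (K : Fin m → EuclideanSpace ℝ (Fin n) → EuclideanSpace ℝ (Fin n) → ℝ)
    (hKsmooth : ∀ i, ∀ x v : EuclideanSpace ℝ (Fin n), v ≠ 0 →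
      DifferentiableAt ℝ
        (fun p : EuclideanSpace ℝ (Fin n) × EuclideanSpace ℝ (Fin n) => K i p.1 p.2) (x, v))
    (hKhom : ∀ i, ∀ x v : EuclideanSpace ℝ (Fin n), v ≠ 0 → ∀ ρ : ℝ, 0 < ρ →
      K i x (ρ • v) = K i x v)
    (hKclosed : ∀ x, IsClosed (coneAt K x))
    (hKconvex : ∀ x, Convex ℝ (coneAt K x))
    (hKpointed : ∀ x, coneAt K x ∩ (-coneAt K x) = {0})
    (hKsolid : ∀ x, (interior (coneAt K x)).Nonempty)
    (T ε : ℝ) (hT : 0 < T) (hε : 0 < ε)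
    (hgeom : ∀ x ∈ C, ∀ θ : EuclideanSpace ℝ (Fin n), ‖θ‖ = 1 → (∀ j, 0 ≤ K j x θ) →
      ∀ i, 0 ≤ K i x θ → K i x θ ≤ ε →
      ε / T ≤ fderiv ℝ
        (fun p : EuclideanSpace ℝ (Fin n) × EuclideanSpace ℝ (Fin n) => K i p.1 p.2)
        (x, θ) (f x, fderiv ℝ f x θ - (inner ℝ θ (fderiv ℝ f x θ) : ℝ) • θ))
    (x : ℝ → EuclideanSpace ℝ (Fin n))
    (hx : ∀ t, HasDerivAt x (f (x t)) t)
    (hx0 : x 0 ∈ C)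
    (δx : ℝ → EuclideanSpace ℝ (Fin n))
    (hδx : ∀ t, HasDerivAt δx (fderiv ℝ f (x t) (δx t)) t)
    (hδx0 : δx 0 ∈ coneAt K (x 0) \ {0}) :
    ∀ t, T ≤ t → ∀ i, ε ≤ K i (x t) (‖δx t‖⁻¹ • δx t) :=
  strict_differential_positivity_geometric_general f hf C hC K hKsmooth hKhom T ε hT hε hgeom x hx
    hx0 δx hδx hδx0
end

section
/- Let F₁,…,F_m be vectors spanning ℝⁿ (with its standard inner product), and suppose there exist ε̄ > 0 and a unit vector v̄ with ⟨F_i, v̄⟩ ≥ ε̄ for all i = 1,…,m. Then for every ε with 0 ≤ ε < ε̄, the set K_ε := {v ∈ ℝⁿ : ⟨F_i, v⟩ ≥ ε‖v‖ for all i} is pointed, i.e. K_ε ∩ (−K_ε) = {0}, and solid, i.e. K_ε has nonempty interior in ℝⁿ. -/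
open scoped RealInnerProductSpace

/-!
If `v` and `-v` both lie in `K_ε` with `ε ≥ 0`, then `⟨F_i, v⟩` is squeezed between `0` and `0`
for every `i`, so `v` is orthogonal to a spanning family and vanishes. For solidity, the strict
inequalities `ε‖v‖ < ⟨F_i, v⟩` define an open subset of `K_ε` (finitely many continuous
conditions), and the feasibility assumption says exactly that `v̄` satisfies them.
-/

section MarginCone

variable {E ι : Type*} [NormedAddCommGroup E] [InnerProductSpace ℝ E]

/-- The cone `K_ε` of the paper. -/
def marginCone (F : ι → E) (ε : ℝ) : Set E :=
  {v | ∀ i, ε * ‖v‖ ≤ ⟪F i, v⟫}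

theorem eq_zero_of_forall_inner_eq_zero {F : ι → E} (hspan : Submodule.span ℝ (Set.range F) = ⊤)
    {v : E} (hv : ∀ i, ⟪F i, v⟫ = 0) : v = 0 := by
  have hfun : innerₛₗ ℝ v = 0 :=
    LinearMap.ext_on_range hspan fun i => by simpa [real_inner_comm] using hv i
  exact inner_self_eq_zero.mp (LinearMap.congr_fun hfun v)

theorem inner_eq_zero_of_mem_marginCone_of_neg_mem {F : ι → E} {ε : ℝ} (hε : 0 ≤ ε) {v : E}
    (hv : v ∈ marginCone F ε) (hnv : -v ∈ marginCone F ε) (i : ι) : ⟪F i, v⟫ = 0 := by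
  have hpos := hv i
  have hneg := hnv i
  rw [inner_neg_right, norm_neg] at hneg
  have : 0 ≤ ε * ‖v‖ := mul_nonneg hε (norm_nonneg v)
  linarith

theorem marginCone_inter_neg {F : ι → E} (hspan : Submodule.span ℝ (Set.range F) = ⊤) {ε : ℝ}
    (hε : 0 ≤ ε) : marginCone F ε ∩ -marginCone F ε = {0} := by
  refine Set.eq_singleton_iff_unique_mem.mpr ⟨⟨fun i => ?_, fun i => ?_⟩, ?_⟩
  · simp
  · simp
  · rintro v ⟨hv, hnv⟩
    exact eq_zero_of_forall_inner_eq_zero hspan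
      (inner_eq_zero_of_mem_marginCone_of_neg_mem hε hv hnv)

theorem isOpen_setOf_forall_mul_norm_lt_inner [Finite ι] (F : ι → E) (ε : ℝ) :
    IsOpen {v : E | ∀ i, ε * ‖v‖ < ⟪F i, v⟫} := by
  rw [Set.ofPred_forall]
  exact isOpen_iInter_of_finite fun i =>
    isOpen_lt (continuous_const.mul continuous_norm) (continuous_const.inner continuous_id)

theorem mem_interior_marginCone [Finite ι] {F : ι → E} {ε : ℝ} {v : E}
    (hv : ∀ i, ε * ‖v‖ < ⟪F i, v⟫) : v ∈ interior (marginCone F ε) :=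
  interior_maximal (fun _ hw i => (hw i).le) (isOpen_setOf_forall_mul_norm_lt_inner F ε) hv

end MarginCone

theorem polyhedral_cone_pointed_solid_general {n m : ℕ}
    (F : Fin m → EuclideanSpace ℝ (Fin n))
    (hspan : Submodule.span ℝ (Set.range F) = ⊤)
    (εbar : ℝ)
    (vbar : EuclideanSpace ℝ (Fin n)) (hvbar : ‖vbar‖ = 1)
    (hfeas : ∀ i, εbar ≤ ⟪F i, vbar⟫)
    (ε : ℝ) (hε0 : 0 ≤ ε) (hε : ε < εbar) :
    {v : EuclideanSpace ℝ (Fin n) | ∀ i, ε * ‖v‖ ≤ ⟪F i, v⟫} ∩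
      (-{v : EuclideanSpace ℝ (Fin n) | ∀ i, ε * ‖v‖ ≤ ⟪F i, v⟫}) = {0} ∧
    (interior {v : EuclideanSpace ℝ (Fin n) | ∀ i, ε * ‖v‖ ≤ ⟪F i, v⟫}).Nonempty :=
  ⟨marginCone_inter_neg hspan hε0,
    ⟨vbar, mem_interior_marginCone fun i => by rw [hvbar, mul_one]; exact hε.trans_le (hfeas i)⟩⟩

/-- **Polyhedral cone fields, pointedness and solidness (Example 1, part 2).**
If `F₁, …, F_m` span ℝⁿ (assumption A2) and there are `ε̄ > 0` and a unit vector `v̄` with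
`⟨F_i, v̄⟩ ≥ ε̄` for all `i` (feasibility assumption A3), then for every `0 ≤ ε < ε̄` the cone
`K_ε = {v : ⟨F_i, v⟩ ≥ ε‖v‖ for all i}` is pointed (`K_ε ∩ (−K_ε) = {0}`) and solid
(it has nonempty interior). -/
theorem polyhedral_cone_pointed_solid {n m : ℕ}
    (F : Fin m → EuclideanSpace ℝ (Fin n))
    (hspan : Submodule.span ℝ (Set.range F) = ⊤)
    (εbar : ℝ) (hεbar : 0 < εbar)
    (vbar : EuclideanSpace ℝ (Fin n)) (hvbar : ‖vbar‖ = 1)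
    (hfeas : ∀ i, εbar ≤ ⟪F i, vbar⟫)
    (ε : ℝ) (hε0 : 0 ≤ ε) (hε : ε < εbar) :
    {v : EuclideanSpace ℝ (Fin n) | ∀ i, ε * ‖v‖ ≤ ⟪F i, v⟫} ∩
      (-{v : EuclideanSpace ℝ (Fin n) | ∀ i, ε * ‖v‖ ≤ ⟪F i, v⟫}) = {0} ∧
    (interior {v : EuclideanSpace ℝ (Fin n) | ∀ i, ε * ‖v‖ ≤ ⟪F i, v⟫}).Nonempty :=
  polyhedral_cone_pointed_solid_general F hspan εbar vbar hvbar hfeas ε hε0 hε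
end

section
/- Let k > 2, let ϑ : [0,∞) → ℝ be continuous (e.g. a trajectory of the pendulum ϑ̇ = v, v̇ = −sin(ϑ) − kv + u), and let δϑ, δv : [0,∞) → ℝ be differentiable functions satisfying the linearized pendulum equations δϑ'(t) = δv(t) and δv'(t) = −cos(ϑ(t)) δϑ(t) − k δv(t) for all t ≥ 0. If δϑ(0) ≥ 0 and δϑ(0) + δv(0) ≥ 0, then δϑ(t) ≥ 0 and δϑ(t) + δv(t) ≥ 0 for all t ≥ 0. That is, the polyhedral cone {(δϑ, δv) ∈ ℝ² : δϑ ≥ 0 and δϑ + δv ≥ 0} is forward invariant for the linearization of the pendulum along any trajectory. -/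
/-!
In the coordinates `x = δϑ`, `y = δϑ + δv` the linearized pendulum reads
`x' = -x + y`, `y' = (k - 1 - cos ϑ) x - (k - 1) y`. For `k ≥ 2` both off-diagonal
coefficients are nonnegative, so the system is cooperative (Metzler), and the row sums are at
most `1`. A cooperative system leaves the closed quadrant invariant: perturbing the solution by
`ε e^{2t}` in both coordinates makes the field point strictly inward on the boundary, so by real
induction the perturbed solution stays in the quadrant, and `ε → 0` gives the claim.
-/

open Set Filter Topology

theorem HasDerivWithinAt.eventually_nonneg_nhdsGT {f : ℝ → ℝ} {f' x : ℝ}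
    (hf : HasDerivWithinAt f f' (Ici x) x) (hx : 0 ≤ f x) (hf' : f x = 0 → 0 < f') :
    ∀ᶠ z in 𝓝[>] x, 0 ≤ f z := by
  rcases hx.eq_or_lt with hzero | hpos
  · have hslope : Tendsto (slope f x) (𝓝[>] x) (𝓝 f') :=
      (hasDerivWithinAt_iff_tendsto_slope' (lt_irrefl x)).1 (hasDerivWithinAt_Ioi_iff_Ici.2 hf)
    filter_upwards [hslope.eventually_const_lt (hf' hzero.symm), self_mem_nhdsWithin]
      with z hz hxz
    rw [slope_def_field, ← hzero, sub_zero] at hz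
    exact ((div_pos_iff_of_pos_right (sub_pos.2 hxz)).1 hz).le
  · exact ((hf.continuousWithinAt.mono Ioi_subset_Ici_self).eventually_const_lt hpos).mono
      fun _ hz ↦ hz.le

theorem nonneg_on_Icc_of_boundary_deriv_pos {X Y X' Y' : ℝ → ℝ} {a b : ℝ}
    (hXc : ContinuousOn X (Icc a b)) (hYc : ContinuousOn Y (Icc a b))
    (hX : ∀ t ∈ Ico a b, HasDerivWithinAt X (X' t) (Ici t) t)
    (hY : ∀ t ∈ Ico a b, HasDerivWithinAt Y (Y' t) (Ici t) t)
    (hXa : 0 ≤ X a) (hYa : 0 ≤ Y a)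
    (hXb : ∀ t ∈ Ico a b, X t = 0 → 0 ≤ Y t → 0 < X' t)
    (hYb : ∀ t ∈ Ico a b, Y t = 0 → 0 ≤ X t → 0 < Y' t) :
    ∀ t ∈ Icc a b, 0 ≤ X t ∧ 0 ≤ Y t := by
  set s : Set ℝ := {t | 0 ≤ X t ∧ 0 ≤ Y t}
  have hclosed : IsClosed (s ∩ Icc a b) := by
    rw [inter_comm]
    exact (hXc.prodMk hYc).preimage_isClosed_of_isClosed isClosed_Icc
      (isClosed_Ici.prod isClosed_Ici)
  refine hclosed.Icc_subset_of_forall_mem_nhdsWithin ⟨hXa, hYa⟩ ?_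
  rintro t ⟨⟨hXt, hYt⟩, ht⟩
  exact ((hX t ht).eventually_nonneg_nhdsGT hXt fun h ↦ hXb t ht h hYt).and
    ((hY t ht).eventually_nonneg_nhdsGT hYt fun h ↦ hYb t ht h hXt)

section Cooperative

variable {x y a₁₁ a₁₂ a₂₁ a₂₂ : ℝ → ℝ} {M : ℝ}
  (hx : ∀ t, 0 ≤ t → HasDerivAt x (a₁₁ t * x t + a₁₂ t * y t) t)
  (hy : ∀ t, 0 ≤ t → HasDerivAt y (a₂₁ t * x t + a₂₂ t * y t) t)
  (ha₁₂ : ∀ t, 0 ≤ t → 0 ≤ a₁₂ t) (ha₂₁ : ∀ t, 0 ≤ t → 0 ≤ a₂₁ t)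
  (hrow₁ : ∀ t, 0 ≤ t → a₁₁ t + a₁₂ t ≤ M) (hrow₂ : ∀ t, 0 ≤ t → a₂₁ t + a₂₂ t ≤ M)
  (hx0 : 0 ≤ x 0) (hy0 : 0 ≤ y 0)
include hx hy ha₁₂ ha₂₁ hrow₁ hrow₂ hx0 hy0

theorem add_exp_nonneg_of_cooperative {ε : ℝ} (hε : 0 < ε) {T : ℝ} (hT : 0 ≤ T) :
    0 ≤ x T + ε * Real.exp ((M + 1) * T) ∧ 0 ≤ y T + ε * Real.exp ((M + 1) * T) := by
  set e : ℝ → ℝ := fun t ↦ ε * Real.exp ((M + 1) * t)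
  have he : ∀ t, HasDerivAt e ((M + 1) * e t) t := fun t ↦ by
    simpa [e, mul_comm, mul_left_comm] using
      (((hasDerivAt_id t).const_mul (M + 1)).exp.const_mul ε)
  have he_pos : ∀ t, 0 < e t := fun t ↦ mul_pos hε (Real.exp_pos _)
  have hX := fun t ht ↦ (hx t ht).add (he t)
  have hY := fun t ht ↦ (hy t ht).add (he t)
  refine nonneg_on_Icc_of_boundary_deriv_pos (X := x + e) (Y := y + e)
    (HasDerivAt.continuousOn fun t ht ↦ hX t ht.1) (HasDerivAt.continuousOn fun t ht ↦ hY t ht.1)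
    (fun t ht ↦ (hX t ht.1).hasDerivWithinAt) (fun t ht ↦ (hY t ht.1).hasDerivWithinAt)
    ?_ ?_ ?_ ?_ T ⟨hT, le_rfl⟩
  · exact add_nonneg hx0 (he_pos 0).le
  · exact add_nonneg hy0 (he_pos 0).le
  · intro t ht hXt hYt
    have hslack : 0 < (M + 1 - a₁₁ t - a₁₂ t) * e t :=
      mul_pos (by linarith [hrow₁ t ht.1]) (he_pos t)
    calc 0 < a₁₂ t * (y + e) t + (M + 1 - a₁₁ t - a₁₂ t) * e t :=
          add_pos_of_nonneg_of_pos (mul_nonneg (ha₁₂ t ht.1) hYt) hslack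
      _ = a₁₁ t * x t + a₁₂ t * y t + (M + 1) * e t - a₁₁ t * (x + e) t := by
          simp only [Pi.add_apply]; ring
      _ = _ := by rw [hXt, mul_zero, sub_zero]
  · intro t ht hYt hXt
    have hslack : 0 < (M + 1 - a₂₁ t - a₂₂ t) * e t :=
      mul_pos (by linarith [hrow₂ t ht.1]) (he_pos t)
    calc 0 < a₂₁ t * (x + e) t + (M + 1 - a₂₁ t - a₂₂ t) * e t :=
          add_pos_of_nonneg_of_pos (mul_nonneg (ha₂₁ t ht.1) hXt) hslack
      _ = a₂₁ t * x t + a₂₂ t * y t + (M + 1) * e t - a₂₂ t * (y + e) t := by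
          simp only [Pi.add_apply]; ring
      _ = _ := by rw [hYt, mul_zero, sub_zero]

theorem nonneg_of_cooperative {T : ℝ} (hT : 0 ≤ T) : 0 ≤ x T ∧ 0 ≤ y T := by
  have hE := Real.exp_pos ((M + 1) * T)
  have of_perturbed (z : ℝ) (h : ∀ ε, 0 < ε → 0 ≤ z + ε * Real.exp ((M + 1) * T)) : 0 ≤ z :=
    le_of_forall_pos_le_add fun δ hδ ↦ by
      simpa [div_mul_cancel₀ _ hE.ne'] using h (δ / _) (div_pos hδ hE)
  exact ⟨of_perturbed _ fun ε hε ↦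
      (add_exp_nonneg_of_cooperative hx hy ha₁₂ ha₂₁ hrow₁ hrow₂ hx0 hy0 hε hT).1,
    of_perturbed _ fun ε hε ↦
      (add_exp_nonneg_of_cooperative hx hy ha₁₂ ha₂₁ hrow₁ hrow₂ hx0 hy0 hε hT).2⟩

end Cooperative

theorem pendulum_cone_forward_invariant_general
    (k : ℝ) (hk : 2 < k)
    (ϑ : ℝ → ℝ)
    (δϑ δv : ℝ → ℝ)
    (hδϑ : ∀ t, 0 ≤ t → HasDerivAt δϑ (δv t) t)
    (hδv : ∀ t, 0 ≤ t → HasDerivAt δv (-Real.cos (ϑ t) * δϑ t - k * δv t) t)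
    (h0 : 0 ≤ δϑ 0) (h0' : 0 ≤ δϑ 0 + δv 0) :
    ∀ t, 0 ≤ t → 0 ≤ δϑ t ∧ 0 ≤ δϑ t + δv t := by
  intro t ht
  exact nonneg_of_cooperative (x := δϑ) (y := δϑ + δv) (M := 1)
    (a₁₁ := fun _ ↦ -1) (a₁₂ := fun _ ↦ 1)
    (a₂₁ := fun s ↦ k - 1 - Real.cos (ϑ s)) (a₂₂ := fun _ ↦ -(k - 1))
    (fun s hs ↦ (hδϑ s hs).congr_deriv (by simp only [Pi.add_apply]; ring))
    (fun s hs ↦ ((hδϑ s hs).add (hδv s hs)).congr_deriv (by simp only [Pi.add_apply]; ring))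
    (fun _ _ ↦ zero_le_one) (fun s _ ↦ by linarith [Real.cos_le_one (ϑ s)])
    (fun _ _ ↦ by norm_num) (fun s _ ↦ by linarith [Real.neg_one_le_cos (ϑ s)])
    h0 h0' ht

/-- **Differential positivity of the damped pendulum (Example 4).**
Let `k > 2` and let `ϑ(·)` be a continuous curve (e.g. the angle component of a pendulum
trajectory). If `δϑ, δv` solve the linearized pendulum equations
`δϑ' = δv`, `δv' = −cos(ϑ(t)) δϑ − k δv`, and initially `δϑ(0) ≥ 0` and
`δϑ(0) + δv(0) ≥ 0`, then `δϑ(t) ≥ 0` and `δϑ(t) + δv(t) ≥ 0` for all `t ≥ 0`: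
the polyhedral cone `{(δϑ, δv) : δϑ ≥ 0, δϑ + δv ≥ 0}` is forward invariant for the
linearization of the pendulum along any trajectory. -/
theorem pendulum_cone_forward_invariant
    (k : ℝ) (hk : 2 < k)
    (ϑ : ℝ → ℝ) (hϑ : Continuous ϑ)
    (δϑ δv : ℝ → ℝ)
    (hδϑ : ∀ t, 0 ≤ t → HasDerivAt δϑ (δv t) t)
    (hδv : ∀ t, 0 ≤ t → HasDerivAt δv (-Real.cos (ϑ t) * δϑ t - k * δv t) t)
    (h0 : 0 ≤ δϑ 0) (h0' : 0 ≤ δϑ 0 + δv 0) :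
    ∀ t, 0 ≤ t → 0 ≤ δϑ t ∧ 0 ≤ δϑ t + δv t :=
  pendulum_cone_forward_invariant_general k hk ϑ δϑ δv hδϑ hδv h0 h0'
end

section
/- Let F₁,…,F_m be vectors spanning ℝⁿ, suppose there exist ε̄ > 0 and a unit vector v̄ with ⟨F_i, v̄⟩ ≥ ε̄ for all i, and let 0 < ε < ε̄. Let K := {v : ⟨F_i, v⟩ ≥ 0 for all i} and K_ε := {v : ⟨F_i, v⟩ ≥ ε‖v‖ for all i}. Then the Hilbert-metric diameter of K_ε inside K is finite: sup{ d_K(v₁, v₂) : v₁, v₂ ∈ K_ε\{0} } < ∞. -/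
/-! For `v` in the ε-subcone and `‖F i‖ ≤ C`, every coordinate `⟪F i, v⟫` lies in
`[ε‖v‖, C‖v‖]`. Hence for `v, w` in the subcone, `v - μ w` and `λ w - v` lie in `K` with
`μ = ε‖v‖ / (C‖w‖)` and `λ = C‖v‖ / (ε‖w‖)`, so `M_K(v,w) ≤ λ`, `m_K(v,w) ≥ μ` and
`d_K(v,w) ≤ log (λ / μ) = log (C² / ε²)`, a bound independent of `v` and `w`. -/

/-- `M_K(v,w) := inf {λ ≥ 0 : λw − v ∈ K}`, equal to `∞` if no such `λ` exists. -/
noncomputable def hilbertM {E : Type*} [NormedAddCommGroup E] [NormedSpace ℝ E]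
    (K : Set E) (v w : E) : ENNReal :=
  sInf {l : ENNReal | ∃ r : ℝ, 0 ≤ r ∧ l = ENNReal.ofReal r ∧ r • w - v ∈ K}

/-- `m_K(v,w) := sup {λ ≥ 0 : v − λw ∈ K}`. -/
noncomputable def hilbertm {E : Type*} [NormedAddCommGroup E] [NormedSpace ℝ E]
    (K : Set E) (v w : E) : ℝ :=
  sSup {r : ℝ | 0 ≤ r ∧ v - r • w ∈ K}

/-- The Hilbert metric `d_K(v,w) := log (M_K(v,w) / m_K(v,w))`, as an extended real. -/
noncomputable def hilbertDist {E : Type*} [NormedAddCommGroup E] [NormedSpace ℝ E]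
    (K : Set E) (v w : E) : EReal :=
  ENNReal.log (hilbertM K v w / ENNReal.ofReal (hilbertm K v w))

open scoped RealInnerProductSpace

section HilbertMetric

variable {E : Type*} [NormedAddCommGroup E] [NormedSpace ℝ E] {K : Set E} {v w : E}

theorem hilbertM_le_ofReal {r : ℝ} (hr : 0 ≤ r) (h : r • w - v ∈ K) :
    hilbertM K v w ≤ ENNReal.ofReal r :=
  sInf_le ⟨r, hr, rfl, h⟩

theorem le_hilbertm {r : ℝ} (hr : 0 ≤ r) (h : v - r • w ∈ K)
    (hbdd : BddAbove {r : ℝ | 0 ≤ r ∧ v - r • w ∈ K}) : r ≤ hilbertm K v w :=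
  le_csSup hbdd ⟨hr, h⟩

theorem hilbertDist_le_log_div {μ l : ℝ} (hμ : 0 < μ) (hl : 0 < l)
    (hμv : v - μ • w ∈ K) (hlv : l • w - v ∈ K)
    (hbdd : BddAbove {r : ℝ | 0 ≤ r ∧ v - r • w ∈ K}) :
    hilbertDist K v w ≤ Real.log (l / μ) := by
  have hratio : hilbertM K v w / ENNReal.ofReal (hilbertm K v w) ≤ ENNReal.ofReal (l / μ) := by
    rw [ENNReal.ofReal_div_of_pos hμ]
    exact ENNReal.div_le_div (hilbertM_le_ofReal hl.le hlv)
      (ENNReal.ofReal_le_ofReal (le_hilbertm hμ.le hμv hbdd))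
  calc hilbertDist K v w ≤ ENNReal.log (ENNReal.ofReal (l / μ)) := ENNReal.log_monotone hratio
    _ = Real.log (l / μ) := ENNReal.log_ofReal_of_pos (div_pos hl hμ)

-- `M_K(v,w) = 0` forces the quotient to `0` whatever the junk value of `m_K(v,w)`.
theorem hilbertDist_eq_bot_of_neg_mem (h : -v ∈ K) : hilbertDist K v w = ⊥ := by
  have hM : hilbertM K v w = 0 :=
    nonpos_iff_eq_zero.1 (by simpa using hilbertM_le_ofReal le_rfl (by simpa using h))
  simp [hilbertDist, hM]

end HilbertMetric

section PolyhedralCone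

variable {E : Type*} [NormedAddCommGroup E] [InnerProductSpace ℝ E] {ι : Type*}
  {F : ι → E} {v w : E}

def polyhedralCone (F : ι → E) : Set E := {v | ∀ i, 0 ≤ ⟪F i, v⟫}

theorem mem_polyhedralCone_of_isEmpty [IsEmpty ι] (v : E) : v ∈ polyhedralCone F :=
  isEmptyElim

theorem sub_smul_mem_polyhedralCone_iff {r : ℝ} :
    v - r • w ∈ polyhedralCone F ↔ ∀ i, r * ⟪F i, w⟫ ≤ ⟪F i, v⟫ := by
  simp only [polyhedralCone, Set.mem_ofPred_eq, inner_sub_right, real_inner_smul_right, sub_nonneg]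

theorem smul_sub_mem_polyhedralCone_iff {r : ℝ} :
    r • w - v ∈ polyhedralCone F ↔ ∀ i, ⟪F i, v⟫ ≤ r * ⟪F i, w⟫ := by
  simp only [polyhedralCone, Set.mem_ofPred_eq, inner_sub_right, real_inner_smul_right, sub_nonneg]

theorem bddAbove_setOf_sub_smul_mem_polyhedralCone (i : ι) (hi : 0 < ⟪F i, w⟫) :
    BddAbove {r : ℝ | 0 ≤ r ∧ v - r • w ∈ polyhedralCone F} :=
  ⟨⟪F i, v⟫ / ⟪F i, w⟫, fun _ ⟨_, hr⟩ => (le_div_iff₀ hi).2 (sub_smul_mem_polyhedralCone_iff.1 hr i)⟩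

theorem hilbertDist_polyhedralCone_le_of_bounds [Nonempty ι] {a A b B : ℝ} (ha : 0 < a)
    (hb : 0 < b) (hv : ∀ i, ⟪F i, v⟫ ∈ Set.Icc a A) (hw : ∀ i, ⟪F i, w⟫ ∈ Set.Icc b B) :
    hilbertDist (polyhedralCone F) v w ≤ Real.log (A * B / (a * b)) := by
  obtain ⟨i₀⟩ := ‹Nonempty ι›
  have hA : 0 < A := ha.trans_le ((hv i₀).1.trans (hv i₀).2)
  have hB : 0 < B := hb.trans_le ((hw i₀).1.trans (hw i₀).2)
  have hμv : v - (a / B) • w ∈ polyhedralCone F := sub_smul_mem_polyhedralCone_iff.2 fun i =>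
    calc a / B * ⟪F i, w⟫ ≤ a / B * B := by gcongr; exact (hw i).2
      _ = a := div_mul_cancel₀ a hB.ne'
      _ ≤ ⟪F i, v⟫ := (hv i).1
  have hlv : (A / b) • w - v ∈ polyhedralCone F := smul_sub_mem_polyhedralCone_iff.2 fun i =>
    calc ⟪F i, v⟫ ≤ A := (hv i).2
      _ = A / b * b := (div_mul_cancel₀ A hb.ne').symm
      _ ≤ A / b * ⟪F i, w⟫ := by gcongr; exact (hw i).1
  have hratio : A / b / (a / B) = A * B / (a * b) := by field_simp
  rw [← hratio]
  exact hilbertDist_le_log_div (div_pos ha hB) (div_pos hA hb) hμv hlv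
    (bddAbove_setOf_sub_smul_mem_polyhedralCone i₀ (hb.trans_le (hw i₀).1))

theorem inner_mem_Icc_of_mem_subcone {ε C : ℝ} (hC : ∀ i, ‖F i‖ ≤ C)
    (hvε : ∀ i, ε * ‖v‖ ≤ ⟪F i, v⟫) (i : ι) : ⟪F i, v⟫ ∈ Set.Icc (ε * ‖v‖) (C * ‖v‖) :=
  ⟨hvε i, (real_inner_le_norm _ _).trans (by gcongr; exact hC i)⟩

theorem hilbertDist_polyhedralCone_le_of_mem_subcone [Nonempty ι] {ε C : ℝ} (hε : 0 < ε)
    (hC : ∀ i, ‖F i‖ ≤ C) (hv : v ≠ 0) (hw : w ≠ 0)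
    (hvε : ∀ i, ε * ‖v‖ ≤ ⟪F i, v⟫) (hwε : ∀ i, ε * ‖w‖ ≤ ⟪F i, w⟫) :
    hilbertDist (polyhedralCone F) v w ≤ Real.log (C ^ 2 / ε ^ 2) := by
  have hv' := norm_pos_iff.2 hv
  have hw' := norm_pos_iff.2 hw
  have hlog : C * ‖v‖ * (C * ‖w‖) / (ε * ‖v‖ * (ε * ‖w‖)) = C ^ 2 / ε ^ 2 := by
    field_simp
  rw [← hlog]
  exact hilbertDist_polyhedralCone_le_of_bounds (mul_pos hε hv') (mul_pos hε hw')
    (inner_mem_Icc_of_mem_subcone hC hvε) (inner_mem_Icc_of_mem_subcone hC hwε)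

end PolyhedralCone

theorem polyhedral_hilbert_diameter_finite_general {n m : ℕ}
    (F : Fin m → EuclideanSpace ℝ (Fin n))
    (ε : ℝ) (hε0 : 0 < ε) :
    ∃ B : ℝ, ∀ v₁ v₂ : EuclideanSpace ℝ (Fin n), v₁ ≠ 0 → v₂ ≠ 0 →
      (∀ i, ε * ‖v₁‖ ≤ ⟪F i, v₁⟫) → (∀ i, ε * ‖v₂‖ ≤ ⟪F i, v₂⟫) →
      hilbertDist {v : EuclideanSpace ℝ (Fin n) | ∀ i, 0 ≤ ⟪F i, v⟫} v₁ v₂ ≤ (B : EReal) := by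
  have hC : ∀ i, ‖F i‖ ≤ ∑ j, ‖F j‖ := fun i =>
    Finset.single_le_sum (fun j _ => norm_nonneg (F j)) (Finset.mem_univ i)
  refine ⟨Real.log ((∑ j, ‖F j‖) ^ 2 / ε ^ 2), fun v₁ v₂ h₁ h₂ hv₁ hv₂ => ?_⟩
  change hilbertDist (polyhedralCone F) v₁ v₂ ≤ _
  cases isEmpty_or_nonempty (Fin m)
  · rw [hilbertDist_eq_bot_of_neg_mem (mem_polyhedralCone_of_isEmpty _)]
    exact bot_le
  · exact hilbertDist_polyhedralCone_le_of_mem_subcone hε0 hC h₁ h₂ hv₁ hv₂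

/-- **Finite Hilbert diameter of the ε-subcone in a polyhedral cone.**
Let `F₁, …, F_m` span ℝⁿ, suppose feasibility holds with margin `ε̄ > 0` at a unit vector
`v̄`, and let `0 < ε < ε̄`. Then the Hilbert-metric diameter, inside the polyhedral cone
`K = {v : ⟨F_i,v⟩ ≥ 0}`, of the subcone `K_ε = {v : ⟨F_i,v⟩ ≥ ε‖v‖}` is finite: there is a
real bound `B` with `d_K(v₁,v₂) ≤ B` for all nonzero `v₁, v₂ ∈ K_ε`. -/
theorem polyhedral_hilbert_diameter_finite {n m : ℕ}
    (F : Fin m → EuclideanSpace ℝ (Fin n))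
    (hspan : Submodule.span ℝ (Set.range F) = ⊤)
    (εbar : ℝ) (hεbar : 0 < εbar)
    (vbar : EuclideanSpace ℝ (Fin n)) (hvbar : ‖vbar‖ = 1)
    (hfeas : ∀ i, εbar ≤ ⟪F i, vbar⟫)
    (ε : ℝ) (hε0 : 0 < ε) (hε : ε < εbar) :
    ∃ B : ℝ, ∀ v₁ v₂ : EuclideanSpace ℝ (Fin n), v₁ ≠ 0 → v₂ ≠ 0 →
      (∀ i, ε * ‖v₁‖ ≤ ⟪F i, v₁⟫) → (∀ i, ε * ‖v₂‖ ≤ ⟪F i, v₂⟫) →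
      hilbertDist {v : EuclideanSpace ℝ (Fin n) | ∀ i, 0 ≤ ⟪F i, v⟫} v₁ v₂ ≤ (B : EReal) :=
  polyhedral_hilbert_diameter_finite_general F ε hε0
end

section
/- Let n ≥ 2 and let ϑ ∈ ℝⁿ satisfy |ϑ_i − ϑ_k| < π/2 for all i, k ∈ {1,…,n}. Define the n×n matrix C(ϑ) by C(ϑ)_{ki} = cos(ϑ_i − ϑ_k) for k ≠ i and C(ϑ)_{kk} = −Σ_{i≠k} cos(ϑ_i − ϑ_k). Then for every δ ∈ ℝⁿ that is not a scalar multiple of the all-ones vector 𝟙 = (1,…,1)ᵀ, one has δᵀ (C(ϑ) + C(ϑ)ᵀ) δ < 0; that is, the symmetric part of the Jacobian of the all-to-all Kuramoto dynamics is negative definite on the orthogonal complement of 𝟙 whenever all pairwise phase differences are less than π/2 in absolute value. -/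
open Matrix Real

/-- The Jacobian matrix (times `n`) of the all-to-all Kuramoto dynamics:
`C(ϑ)_{ki} = cos(ϑ_i − ϑ_k)` for `k ≠ i` and `C(ϑ)_{kk} = −Σ_{i≠k} cos(ϑ_i − ϑ_k)`. -/
noncomputable def kuramotoC {n : ℕ} (ϑ : Fin n → ℝ) : Matrix (Fin n) (Fin n) ℝ :=
  fun k i =>
    if k = i then -(∑ j ∈ Finset.univ.erase k, Real.cos (ϑ j - ϑ k))
    else Real.cos (ϑ i - ϑ k)

lemma kuramotoC_symm {n : ℕ} (ϑ : Fin n → ℝ) : (kuramotoC ϑ)ᵀ = kuramotoC ϑ := by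
  ext k i
  simp only [Matrix.transpose_apply, kuramotoC]
  by_cases h : k = i
  · subst h; simp
  · rw [if_neg h, if_neg (Ne.symm h), show ϑ k - ϑ i = -(ϑ i - ϑ k) by ring, Real.cos_neg]

lemma kuramotoC_quadform {n : ℕ} (ϑ : Fin n → ℝ) (δ : Fin n → ℝ) :
    δ ⬝ᵥ (kuramotoC ϑ *ᵥ δ) =
      -(1/2) * ∑ k, ∑ i, Real.cos (ϑ i - ϑ k) * (δ i - δ k)^2 := by
  have step1 : δ ⬝ᵥ (kuramotoC ϑ *ᵥ δ) =
      ∑ k, ∑ i, Real.cos (ϑ i - ϑ k) * (δ k * δ i - δ k * δ k) := by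
    simp only [dotProduct, Matrix.mulVec, dotProduct]
    refine Finset.sum_congr rfl (fun k _ => ?_)
    rw [← Finset.sum_erase (Finset.univ) (f := fun i =>
        Real.cos (ϑ i - ϑ k) * (δ k * δ i - δ k * δ k)) (a := k) (by ring)]
    rw [← Finset.sum_erase_add (Finset.univ) (f := fun i => kuramotoC ϑ k i * δ i) (h := Finset.mem_univ k)]
    have hdiag : kuramotoC ϑ k k = -(∑ j ∈ Finset.univ.erase k, Real.cos (ϑ j - ϑ k)) := by
      simp [kuramotoC]
    have hoff : ∀ i ∈ Finset.univ.erase k, kuramotoC ϑ k i * δ i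
        = Real.cos (ϑ i - ϑ k) * δ i := by
      intro i hi
      have : k ≠ i := (Finset.ne_of_mem_erase hi).symm
      simp [kuramotoC, this]
    rw [Finset.sum_congr rfl hoff, hdiag, mul_add, Finset.mul_sum, neg_mul, mul_neg,
      Finset.sum_mul, Finset.mul_sum, ← sub_eq_add_neg, ← Finset.sum_sub_distrib]
    refine (Finset.sum_congr rfl (fun i _ => ?_))
    ring
  rw [step1]
  have swap : ∑ k, ∑ i, Real.cos (ϑ i - ϑ k) * (δ k * δ i - δ k * δ k)
      = ∑ k, ∑ i, Real.cos (ϑ i - ϑ k) * (δ i * δ k - δ i * δ i) := by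
    rw [Finset.sum_comm]
    refine Finset.sum_congr rfl (fun k _ => Finset.sum_congr rfl (fun i _ => ?_))
    rw [show ϑ k - ϑ i = -(ϑ i - ϑ k) by ring, Real.cos_neg]
  have two_eq : (2:ℝ) * ∑ k, ∑ i, Real.cos (ϑ i - ϑ k) * (δ k * δ i - δ k * δ k)
      = -(∑ k, ∑ i, Real.cos (ϑ i - ϑ k) * (δ i - δ k)^2) := by
    rw [two_mul]
    nth_rewrite 2 [swap]
    rw [eq_neg_iff_add_eq_zero, ← Finset.sum_add_distrib, ← Finset.sum_add_distrib]
    refine Finset.sum_eq_zero fun k _ => ?_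
    rw [← Finset.sum_add_distrib, ← Finset.sum_add_distrib]
    exact Finset.sum_eq_zero fun i _ => by ring
  linarith [two_eq]

/-- **Negative definiteness of the Kuramoto Jacobian transverse to consensus.**
If all pairwise phase differences satisfy `|ϑ_i − ϑ_k| < π/2`, then for every `δ` that is
not a scalar multiple of the all-ones vector `𝟙`, `δᵀ(C(ϑ) + C(ϑ)ᵀ)δ < 0`: the symmetric
part of the Jacobian of the all-to-all Kuramoto dynamics is negative definite on the
complement of `𝟙`. -/
theorem kuramoto_jacobian_negative_definite {n : ℕ} (hn : 2 ≤ n)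
    (ϑ : Fin n → ℝ) (hϑ : ∀ i k, |ϑ i - ϑ k| < π / 2)
    (δ : Fin n → ℝ) (hδ : ¬ ∃ c : ℝ, δ = fun _ => c) :
    δ ⬝ᵥ ((kuramotoC ϑ + (kuramotoC ϑ)ᵀ) *ᵥ δ) < 0 := by
  have hc : ∀ i k : Fin n, 0 < Real.cos (ϑ i - ϑ k) := by
    intro i k
    apply Real.cos_pos_of_mem_Ioo
    constructor
    · linarith [abs_lt.mp (hϑ i k) |>.1]
    · exact (abs_lt.mp (hϑ i k)).2
  -- find a pair with distinct values
  have k0 : Fin n := ⟨0, by omega⟩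
  obtain ⟨i0, hi0⟩ : ∃ i, δ i ≠ δ k0 := by
    by_contra h
    push_neg at h
    exact hδ ⟨δ k0, funext h⟩
  have hP : 0 < ∑ k, ∑ i, Real.cos (ϑ i - ϑ k) * (δ i - δ k)^2 := by
    apply Finset.sum_pos'
    · intro k _
      exact Finset.sum_nonneg fun i _ => mul_nonneg (hc i k).le (sq_nonneg _)
    · refine ⟨k0, Finset.mem_univ _, ?_⟩
      apply Finset.sum_pos'
      · intro i _; exact mul_nonneg (hc i k0).le (sq_nonneg _)
      · refine ⟨i0, Finset.mem_univ _, ?_⟩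
        have : δ i0 - δ k0 ≠ 0 := sub_ne_zero.mpr hi0
        have h2 : 0 < (δ i0 - δ k0)^2 := by positivity
        exact mul_pos (hc i0 k0) h2
  rw [Matrix.add_mulVec, dotProduct_add, kuramotoC_symm, kuramotoC_quadform]
  linarith
end

section
/- Let n ≥ 1 and let ϑ : ℝ → ℝⁿ be a differentiable solution of the all-to-all Kuramoto model ϑ̇_k(t) = (1/n) Σ_{i=1}^n sin(ϑ_i(t) − ϑ_k(t)) for k = 1,…,n. Define the complex order parameter r(t) := (1/n) Σ_{k=1}^n e^{i ϑ_k(t)} ∈ ℂ. Then for all t, d/dt |r(t)|² = (2/n) Σ_{k=1}^n ( Im( e^{−i ϑ_k(t)} r(t) ) )². In particular |r(t)| is nondecreasing; writing r = ρ e^{iφ} with ρ = |r|, this is the identity ρ̇ = (ρ/n) Σ_{k=1}^n sin(ϑ_k − φ)². -/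
/-! Differentiating `r = (1/n) Σ_k e^{iϑ_k}` gives `ṙ = (1/n) Σ_k i ϑ̇_k e^{iϑ_k}`, so
`d/dt |r|² = 2⟪r, ṙ⟫ = (2/n) Σ_k ϑ̇_k Im(e^{-iϑ_k} r)`. The Kuramoto vector field is exactly
`ϑ̇_k = Im(e^{-iϑ_k} r)`, which turns this into a sum of squares. -/

open Complex Real

/-- The complex order parameter (centroid) of `n` phases:
`r(t) = (1/n) Σ_k e^{i ϑ_k(t)}`. -/
noncomputable def orderParam (n : ℕ) (ϑ : ℝ → Fin n → ℝ) (t : ℝ) : ℂ :=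
  (1 / (n : ℂ)) * ∑ k, Complex.exp (Complex.I * (ϑ t k : ℂ))

open ComplexConjugate

theorem Complex.inner_I_mul (z w : ℂ) : inner ℝ z (I * w) = (conj w * z).im := by
  rw [Complex.inner, mul_assoc, I_mul_re, ← conj_im, map_mul, conj_conj]

theorem Complex.exp_neg_I_mul_ofReal (x : ℝ) : exp (-I * x) = conj (exp (I * x)) := by
  rw [← exp_conj, map_mul, conj_I, conj_ofReal]

theorem im_exp_neg_mul_orderParam {n : ℕ} (ϑ : ℝ → Fin n → ℝ) (t : ℝ) (k : Fin n) :
    (exp (-I * ϑ t k) * orderParam n ϑ t).im = 1 / n * ∑ i, Real.sin (ϑ t i - ϑ t k) := by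
  have hrot : exp (-I * ϑ t k) * orderParam n ϑ t =
      ((1 / n : ℝ) : ℂ) * ∑ i, exp ((ϑ t i - ϑ t k : ℝ) * I) := by
    simp only [orderParam, Finset.mul_sum, mul_left_comm _ (1 / (n : ℂ)), ← Complex.exp_add]
    push_cast
    ring_nf
  simp only [hrot, im_ofReal_mul, im_sum, exp_ofReal_mul_I_im]

theorem hasDerivAt_orderParam {n : ℕ} {ϑ : ℝ → Fin n → ℝ} {ω : Fin n → ℝ} {t : ℝ}
    (h : HasDerivAt ϑ ω t) :
    HasDerivAt (orderParam n ϑ) (1 / n * ∑ k, I * (ω k * exp (I * ϑ t k))) t := by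
  have hk (k : Fin n) : HasDerivAt (fun s => exp (I * ϑ s k)) (I * (ω k * exp (I * ϑ t k))) t :=
    (((hasDerivAt_pi.1 h k).ofReal_comp.const_mul I).cexp).congr_deriv (by ring)
  exact (HasDerivAt.fun_sum fun k _ => hk k).const_mul _

theorem hasDerivAt_norm_orderParam_sq {n : ℕ} {ϑ : ℝ → Fin n → ℝ} {ω : Fin n → ℝ} {t : ℝ}
    (h : HasDerivAt ϑ ω t) :
    HasDerivAt (fun s => ‖orderParam n ϑ s‖ ^ 2)
      (2 / n * ∑ k, ω k * (exp (-I * ϑ t k) * orderParam n ϑ t).im) t := by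
  refine (hasDerivAt_orderParam h).norm_sq.congr_deriv ?_
  rw [show (1 / n : ℂ) = (1 / n : ℝ) by push_cast; rfl, ← Complex.real_smul, inner_smul_right]
  simp only [inner_sum, Complex.inner_I_mul, map_mul, Complex.conj_ofReal, mul_assoc,
    im_ofReal_mul, Complex.exp_neg_I_mul_ofReal]
  ring

theorem kuramoto_order_parameter_derivative_general {n : ℕ}
    (ϑ : ℝ → Fin n → ℝ)
    (hϑ : ∀ t, HasDerivAt ϑ
      (fun k => (1 / (n : ℝ)) * ∑ i, Real.sin (ϑ t i - ϑ t k)) t) :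
    (∀ t, HasDerivAt (fun s => ‖orderParam n ϑ s‖ ^ 2)
      ((2 / (n : ℝ)) *
        ∑ k, (Complex.exp (-Complex.I * (ϑ t k : ℂ)) * orderParam n ϑ t).im ^ 2) t) ∧
    Monotone fun t => ‖orderParam n ϑ t‖ := by
  have hderiv (t : ℝ) := hasDerivAt_norm_orderParam_sq (hϑ t)
  simp only [← im_exp_neg_mul_orderParam, ← sq] at hderiv
  have hmono : Monotone fun t => ‖orderParam n ϑ t‖ ^ 2 :=
    monotone_of_hasDerivAt_nonneg hderiv fun t => by positivity
  exact ⟨hderiv, fun s t hst =>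
    (pow_le_pow_iff_left₀ (norm_nonneg _) (norm_nonneg _) two_ne_zero).1 (hmono hst)⟩

/-- **Evolution of the Kuramoto order parameter.** Along any solution of the all-to-all
Kuramoto model `ϑ̇_k = (1/n) Σ_i sin(ϑ_i − ϑ_k)`, the squared modulus of the order
parameter `r(t) = (1/n) Σ_k e^{iϑ_k(t)}` satisfies
`d/dt |r(t)|² = (2/n) Σ_k (Im(e^{−iϑ_k(t)} r(t)))²`; in particular `|r(t)|` is
nondecreasing (writing `r = ρe^{iφ}`, this is `ρ̇ = (ρ/n) Σ_k sin(ϑ_k − φ)²`). -/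
theorem kuramoto_order_parameter_derivative {n : ℕ} (hn : 1 ≤ n)
    (ϑ : ℝ → Fin n → ℝ)
    (hϑ : ∀ t, HasDerivAt ϑ
      (fun k => (1 / (n : ℝ)) * ∑ i, Real.sin (ϑ t i - ϑ t k)) t) :
    (∀ t, HasDerivAt (fun s => ‖orderParam n ϑ s‖ ^ 2)
      ((2 / (n : ℝ)) *
        ∑ k, (Complex.exp (-Complex.I * (ϑ t k : ℂ)) * orderParam n ϑ t).im ^ 2) t) ∧
    Monotone fun t => ‖orderParam n ϑ t‖ :=
  kuramoto_order_parameter_derivative_general ϑ hϑ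
end
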